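/- arXiv:1610.06663 — 4 statements merged into one kernel-verified Lean document; each statement's English description precedes it below -/
import Mathlib

section
/- In the loop L = ℤ × ℤ with product (p,q)·(p',q') = (p+p', q+q'+C(p,2)·C(p',2)), the subset L₂ = {(0,q) | q ∈ ℤ} is the centre of L: every element of L₂ commutes and associates with all elements of L, and conversely any element commuting and associating with all elements lies in L₂. -/
/-- C(p,2) = p(p-1)/2 for an arbitrary integer p. -/
def c2 (p : ℤ) : ℤ := p * (p - 1) / 2

/-- The product (p,q)·(p',q') = (p+p', q+q'+C(p,2)·C(p',2)). -/
def lmul4 (x y : ℤ × ℤ) : ℤ × ℤ := (x.1 + y.1, x.2 + y.2 + c2 x.1 * c2 y.1)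

/-!
Write z = (a, b). Comparing second coordinates, z·(x·y) = (z·x)·y says
C(x₁,2)C(y₁,2) + C(a,2)C(x₁+y₁,2) = C(a,2)C(x₁,2) + C(a+x₁,2)C(y₁,2).
For x₁ = y₁ = 1 this gives C(a,2) = 0, and for x₁ = 1, y₁ = 2 it gives C(a+1,2) = 3C(a,2) = 0;
Pascal's rule C(a+1,2) = C(a,2) + a then forces a = 0.
Conversely, if a = 0 then C(a,2) = 0, so multiplying by z on either side just adds b to the
second coordinate, which commutes and associates with everything.
-/

lemma c2_zero : c2 0 = 0 := rfl

lemma c2_add_one (p : ℤ) : c2 (p + 1) = c2 p + p := by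
  rw [c2, c2, show (p + 1) * (p + 1 - 1) = p * (p - 1) + p * 2 by ring,
    Int.add_mul_ediv_right _ _ two_ne_zero]

lemma fst_eq_zero_of_forall_lmul4_assoc {z : ℤ × ℤ}
    (h : ∀ x y : ℤ × ℤ, lmul4 z (lmul4 x y) = lmul4 (lmul4 z x) y) : z.1 = 0 := by
  have h11 := congrArg Prod.snd (h (1, 0) (1, 0))
  have h12 := congrArg Prod.snd (h (1, 0) (2, 0))
  have pascal := c2_add_one z.1
  simp only [lmul4] at h11 h12
  norm_num [show c2 1 = 0 from rfl, show c2 2 = 1 from rfl, show c2 3 = 3 from rfl] at h11 h12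
  linarith

lemma lmul4_eq_of_fst_eq_zero_left {z : ℤ × ℤ} (hz : z.1 = 0) (x : ℤ × ℤ) :
    lmul4 z x = (x.1, z.2 + x.2) := by
  simp [lmul4, hz, c2_zero]

lemma lmul4_eq_of_fst_eq_zero_right {z : ℤ × ℤ} (hz : z.1 = 0) (x : ℤ × ℤ) :
    lmul4 x z = (x.1, x.2 + z.2) := by
  simp [lmul4, hz, c2_zero]

/-- In the loop L = ℤ × ℤ with product (p,q)·(p',q') = (p+p', q+q'+C(p,2)C(p',2)),
an element z is in the centre (it commutes and associates in all positions with
all elements) if and only if z ∈ L₂ = {(0,q) | q ∈ ℤ}, i.e. z.1 = 0. -/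
theorem stmt1 (z : ℤ × ℤ) :
    ((∀ x : ℤ × ℤ, lmul4 z x = lmul4 x z) ∧
     (∀ x y : ℤ × ℤ, lmul4 z (lmul4 x y) = lmul4 (lmul4 z x) y) ∧
     (∀ x y : ℤ × ℤ, lmul4 x (lmul4 z y) = lmul4 (lmul4 x z) y) ∧
     (∀ x y : ℤ × ℤ, lmul4 x (lmul4 y z) = lmul4 (lmul4 x y) z)) ↔
    z.1 = 0 := by
  refine ⟨fun ⟨_, hassoc, _⟩ => fst_eq_zero_of_forall_lmul4_assoc hassoc, fun hz => ?_⟩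
  have hl := lmul4_eq_of_fst_eq_zero_left hz
  have hr := lmul4_eq_of_fst_eq_zero_right hz
  refine ⟨fun x => ?_, fun x y => ?_, fun x y => ?_, fun x y => ?_⟩ <;>
    simp only [hl, hr] <;> ext <;> simp only [lmul4] <;> ring
end

section
/- In the loop L = ℤ × ℤ with product (p,q)·(p',q') = (p+p', q+q'+C(p,2)·C(p',2)), for all a,b,p,r ∈ ℤ the commutator of left translations satisfies [L_{(p,0)}, L_{(r,0)}](a,b) = (a, b + (1/2)·a·p·r·(p−r)), i.e. L_{(p,0)}⁻¹ ∘ L_{(r,0)}⁻¹ ∘ L_{(p,0)} ∘ L_{(r,0)} sends (a,b) to (a, b + a·p·r·(p−r)/2). -/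
/-- Left translation L_c by c in the loop L = ℤ × ℤ with product
(p,q)·(p',q') = (p+p', q+q'+C(p,2)·C(p',2)), as a permutation of L. -/
def Ltrans (c : ℤ × ℤ) : Equiv.Perm (ℤ × ℤ) where
  toFun x := (c.1 + x.1, c.2 + x.2 + c2 c.1 * c2 x.1)
  invFun y := (y.1 - c.1, y.2 - c.2 - c2 c.1 * c2 (y.1 - c.1))
  left_inv x := by
    refine Prod.ext (by dsimp; ring) ?_
    dsimp
    rw [add_sub_cancel_left]
    ring
  right_inv y := by
    refine Prod.ext (by dsimp; ring) ?_
    dsimp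
    ring

lemma two_c2 (x : ℤ) : 2 * c2 x = x * (x - 1) := by
  have h : (2:ℤ) ∣ x * (x - 1) := by
    rcases Int.even_or_odd x with h | h
    · exact Dvd.dvd.mul_right h.two_dvd _
    · obtain ⟨k, hk⟩ := h
      exact Dvd.dvd.mul_left ⟨k, by omega⟩ _
  exact Int.mul_ediv_cancel' h

/-- The commutator F⁻¹ ∘ G⁻¹ ∘ F ∘ G of two permutations. -/
def pcomm (F G : Equiv.Perm (ℤ × ℤ)) : Equiv.Perm (ℤ × ℤ) := F⁻¹ * G⁻¹ * F * G

/-- [L_{(p,0)}, L_{(r,0)}] sends (a,b) to (a, b + a·p·r·(p−r)/2). -/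
theorem stmt2 (a b p r : ℤ) :
    pcomm (Ltrans (p, 0)) (Ltrans (r, 0)) (a, b) = (a, b + a * p * r * (p - r) / 2) := by
  have key : a * p * r * (p - r) =
      2 * (c2 r * c2 a + c2 p * c2 (r + a) - c2 r * c2 (p + a) - c2 p * c2 a) := by
    have h2 : (2:ℤ) ≠ 0 := by norm_num
    apply mul_left_cancel₀ h2
    have e1 := two_c2 r; have e2 := two_c2 a; have e3 := two_c2 p
    have e4 := two_c2 (r + a); have e5 := two_c2 (p + a)
    linear_combination -((2 * c2 a) * e1 + r * (r - 1) * e2 + (2 * c2 (r + a)) * e3 +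
      p * (p - 1) * e4 - (2 * c2 (p + a)) * e1 - r * (r - 1) * e5 - (2 * c2 a) * e3 -
      p * (p - 1) * e2)
  simp only [pcomm, Equiv.Perm.mul_apply, Ltrans, Equiv.Perm.inv_def,
    Equiv.coe_fn_mk, Equiv.coe_fn_symm_mk]
  refine Prod.ext (by dsimp; ring) ?_
  dsimp
  rw [show p + (r + a) - r = p + a by ring, show p + a - p = a by ring,
    key, Int.mul_ediv_cancel_left _ (by norm_num)]
  ring
end

section
/- The left multiplication group of the loop L = ℤ × ℤ with product (p,q)·(p',q') = (p+p', q+q'+C(p,2)·C(p',2)) is nilpotent of class at most 3: every 4-fold iterated commutator [F₁,[F₂,[F₃,F₄]]] of elements of the group generated by the left translations L_c (c ∈ L) is the identity permutation. -/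
/-!
Every element of the left multiplication group has the form
`x ↦ (x₁ + a, x₂ + α C(x₁,2) + β x₁ + γ)`. These maps form a group in which `(a, α)` composes
additively, so a commutator has `a = α = 0`; the commutator of any such map with one having
`a = α = 0` is a vertical translation `x ↦ (x₁, x₂ + γ)`, and those are central.
-/

lemma two_mul_c2 (p : ℤ) : 2 * c2 p = p * (p - 1) :=
  Int.two_mul_ediv_two_of_even (Int.even_mul_pred_self p)

lemma c2_add (a b : ℤ) : c2 (a + b) = c2 a + c2 b + a * b := by
  apply mul_left_cancel₀ (two_ne_zero' ℤ)
  linear_combination two_mul_c2 (a + b) - two_mul_c2 a - two_mul_c2 b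

lemma c2_neg (a : ℤ) : c2 (-a) = c2 a + a := by
  apply mul_left_cancel₀ (two_ne_zero' ℤ)
  linear_combination two_mul_c2 (-a) - two_mul_c2 a

def quadMap (a α β γ : ℤ) (x : ℤ × ℤ) : ℤ × ℤ :=
  (a + x.1, x.2 + α * c2 x.1 + β * x.1 + γ)

lemma quadMap_quadMap (a α β γ b α' β' γ' : ℤ) (x : ℤ × ℤ) :
    quadMap a α β γ (quadMap b α' β' γ' x) =
      quadMap (a + b) (α + α') (β + β' + α * b) (γ + γ' + α * c2 b + β * b) x := by
  refine Prod.ext ?_ ?_ <;> (simp only [quadMap, c2_add]; ring)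

def quadPerm (a α β γ : ℤ) : Equiv.Perm (ℤ × ℤ) where
  toFun := quadMap a α β γ
  invFun := quadMap (-a) (-α) (α * a - β) (β * a - γ - α * (c2 a + a))
  left_inv x := by
    rw [quadMap_quadMap]
    refine Prod.ext ?_ ?_ <;> simp only [quadMap]
    · ring
    · linear_combination -α * two_mul_c2 a
  right_inv x := by
    rw [quadMap_quadMap]
    refine Prod.ext ?_ ?_ <;> (simp only [quadMap, c2_neg]; ring)

lemma quadPerm_mul (a α β γ b α' β' γ' : ℤ) :
    quadPerm a α β γ * quadPerm b α' β' γ' =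
      quadPerm (a + b) (α + α') (β + β' + α * b) (γ + γ' + α * c2 b + β * b) :=
  Equiv.ext (quadMap_quadMap a α β γ b α' β' γ')

lemma quadPerm_inv (a α β γ : ℤ) :
    (quadPerm a α β γ)⁻¹ = quadPerm (-a) (-α) (α * a - β) (β * a - γ - α * (c2 a + a)) :=
  Equiv.ext fun _ => rfl

lemma quadPerm_zero : quadPerm 0 0 0 0 = 1 := by
  ext x <;> simp [quadPerm, quadMap, c2_zero]

lemma Ltrans_eq_quadPerm (c : ℤ × ℤ) : Ltrans c = quadPerm c.1 (c2 c.1) 0 c.2 := by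
  ext x
  · rfl
  · simp only [Ltrans, quadPerm, quadMap, Equiv.coe_fn_mk]
    ring

def quadPermGroup : Subgroup (Equiv.Perm (ℤ × ℤ)) where
  carrier := {F | ∃ a α β γ, F = quadPerm a α β γ}
  mul_mem' := by
    rintro _ _ ⟨a, α, β, γ, rfl⟩ ⟨b, α', β', γ', rfl⟩
    exact ⟨_, _, _, _, quadPerm_mul a α β γ b α' β' γ'⟩
  one_mem' := ⟨0, 0, 0, 0, quadPerm_zero.symm⟩
  inv_mem' := by
    rintro _ ⟨a, α, β, γ, rfl⟩
    exact ⟨_, _, _, _, quadPerm_inv a α β γ⟩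

lemma closure_range_Ltrans_le : Subgroup.closure (Set.range Ltrans) ≤ quadPermGroup :=
  Subgroup.closure_le _ |>.mpr <| by
    rintro _ ⟨c, rfl⟩
    exact ⟨_, _, _, _, Ltrans_eq_quadPerm c⟩

lemma pcomm_quadPerm (a α β γ b α' β' γ' : ℤ) :
    ∃ δ, pcomm (quadPerm a α β γ) (quadPerm b α' β' γ') = quadPerm 0 0 (α * b - α' * a) δ := by
  simp only [pcomm, quadPerm_inv, quadPerm_mul]
  apply Exists.intro
  congr 1 <;> ring

lemma quadPerm_commute_translation (a α β γ δ : ℤ) :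
    Commute (quadPerm a α β γ) (quadPerm 0 0 0 δ) := by
  rw [Commute, SemiconjBy, quadPerm_mul, quadPerm_mul, c2_zero]
  congr 1 <;> ring

lemma pcomm_eq_one_of_commute {F G : Equiv.Perm (ℤ × ℤ)} (h : Commute F G) : pcomm F G = 1 :=
  commutatorElement_eq_one_iff_commute.mpr h.inv_inv

/-- The left multiplication group of the loop L = ℤ × ℤ with product
(p,q)·(p',q') = (p+p', q+q'+C(p,2)C(p',2)) is nilpotent of class at most 3:
every 4-fold iterated commutator of elements of the subgroup of Perm(L)
generated by the left translations is the identity. -/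
theorem stmt3 (F₁ F₂ F₃ F₄ : Equiv.Perm (ℤ × ℤ))
    (h₁ : F₁ ∈ Subgroup.closure (Set.range Ltrans))
    (h₂ : F₂ ∈ Subgroup.closure (Set.range Ltrans))
    (h₃ : F₃ ∈ Subgroup.closure (Set.range Ltrans))
    (h₄ : F₄ ∈ Subgroup.closure (Set.range Ltrans)) :
    pcomm F₁ (pcomm F₂ (pcomm F₃ F₄)) = 1 := by
  obtain ⟨a₁, α₁, β₁, γ₁, rfl⟩ := closure_range_Ltrans_le h₁
  obtain ⟨a₂, α₂, β₂, γ₂, rfl⟩ := closure_range_Ltrans_le h₂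
  obtain ⟨a₃, α₃, β₃, γ₃, rfl⟩ := closure_range_Ltrans_le h₃
  obtain ⟨a₄, α₄, β₄, γ₄, rfl⟩ := closure_range_Ltrans_le h₄
  obtain ⟨δ, hδ⟩ := pcomm_quadPerm a₃ α₃ β₃ γ₃ a₄ α₄ β₄ γ₄
  obtain ⟨ε, hε⟩ := pcomm_quadPerm a₂ α₂ β₂ γ₂ 0 0 (α₃ * a₄ - α₄ * a₃) δ
  rw [hδ, hε, mul_zero, zero_mul, sub_zero]
  exact pcomm_eq_one_of_commute (quadPerm_commute_translation a₁ α₁ β₁ γ₁ ε)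
end

section
/- Let F be a free group on generators x₁,…,xₙ and let M : F → (ℚ⟨⟨X₁,…,Xₙ⟩⟩)ˣ be the Magnus homomorphism into the units of the ring of non-commutative formal power series, sending xᵢ ↦ 1 + Xᵢ. Then for n ≥ 2, the image of the iterated commutator [x₁,[x₂,[…,[x_{n−1},xₙ]…]]]·x₁ under M has the form 1 + X₁ + (terms of total degree ≥ n). -/
/-- Non-commutative formal power series in variables X₁,…,Xₙ over ℚ:
functions assigning to each word in the free monoid its coefficient. -/
def NCSeries (n : ℕ) : Type := FreeMonoid (Fin n) → ℚ

instance {n : ℕ} : DecidableEq (FreeMonoid (Fin n)) :=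
  inferInstanceAs (DecidableEq (List (Fin n)))

/-- Convolution product of non-commutative power series. -/
def ncmul {n : ℕ} (f g : NCSeries n) : NCSeries n := fun w =>
  ∑ k ∈ Finset.range ((FreeMonoid.toList w).length + 1),
    f (FreeMonoid.ofList ((FreeMonoid.toList w).take k)) *
      g (FreeMonoid.ofList ((FreeMonoid.toList w).drop k))

/-- The power series 1. -/
def ncone {n : ℕ} : NCSeries n := fun w => if w = 1 then 1 else 0

/-- The power series 1 + Xᵢ. -/
def onePlusX {n : ℕ} (i : Fin n) : NCSeries n := fun w =>
  if w = 1 ∨ w = FreeMonoid.of i then 1 else 0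

/-- The group commutator [a,b] = a⁻¹b⁻¹ab. -/
def gcomm {n : ℕ} (a b : FreeGroup (Fin n)) : FreeGroup (Fin n) :=
  a⁻¹ * b⁻¹ * a * b

/-!
If `M a ≡ 1` modulo degree `p` and `M b ≡ 1` modulo degree `q`, then `M a` and `M b` commute
modulo degree `p + q`. Since `M (a * b) = M (b * a) * M [a, b]` and `M (b * a)` has constant
term `1`, it can be cancelled, so `M [a, b] ≡ 1` modulo degree `p + q`. Along the nested
commutator the degrees add up to `n`, and multiplying by `M x₁ = 1 + X₁` leaves only `1 + X₁`
below degree `n`.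
-/

namespace NCSeries

variable {n : ℕ}

def EqBelowDegree (k : ℕ) (f g : NCSeries n) : Prop :=
  ∀ w : FreeMonoid (Fin n), (FreeMonoid.toList w).length < k → f w = g w

lemma ofList_eq_one_iff {l : List (Fin n)} : FreeMonoid.ofList l = 1 ↔ l = [] := by
  rw [← FreeMonoid.ofList_nil, FreeMonoid.ofList.injective.eq_iff]

@[simp]
lemma ncone_one : (ncone : NCSeries n) 1 = 1 := if_pos rfl

lemma ncone_ofList (l : List (Fin n)) :
    (ncone : NCSeries n) (FreeMonoid.ofList l) = if l = [] then 1 else 0 := by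
  simp only [ncone, ofList_eq_one_iff]

lemma ncmul_apply_one (f g : NCSeries n) : ncmul f g 1 = f 1 * g 1 := by
  simp [ncmul]

lemma ncmul_ncone (f : NCSeries n) : ncmul f ncone = f := by
  funext w
  rw [ncmul, Finset.sum_eq_single_of_mem _ (Finset.self_mem_range_succ _)]
  · simp
  · intro k hk hkw
    have : k < (FreeMonoid.toList w).length := by
      have := Finset.mem_range.mp hk; omega
    simp [ncone_ofList, this]

lemma ncone_ncmul (f : NCSeries n) : ncmul ncone f = f := by
  funext w
  rw [ncmul, Finset.sum_eq_single_of_mem 0 (by simp)]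
  · simp
  · intro k hk hk0
    have htake : (FreeMonoid.toList w).take k ≠ [] := by
      have := Finset.mem_range.mp hk
      rw [Ne, List.take_eq_nil_iff, ← List.length_eq_zero_iff]; omega
    simp [ncone_ofList, htake]

lemma onePlusX_eqBelowDegree_one (i : Fin n) : EqBelowDegree 1 (onePlusX i) ncone := by
  intro w hw
  obtain rfl : w = 1 := by
    rw [← FreeMonoid.ofList_toList w, ofList_eq_one_iff]
    exact List.eq_nil_of_length_eq_zero (by omega)
  simp [onePlusX, ncone]

/-- For `|w| < p + q`, in every term `f u * g v` of the product one of the two factors is a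
coefficient of `1`. -/
lemma ncmul_apply_of_eqBelowDegree_ncone {p q : ℕ} {f g : NCSeries n}
    (hf : EqBelowDegree p f ncone) (hg : EqBelowDegree q g ncone) (w : FreeMonoid (Fin n))
    (hw : (FreeMonoid.toList w).length < p + q) :
    ncmul f g w = f w + g w - ncone w := by
  calc ncmul f g w = ncmul f ncone w + ncmul ncone g w - ncmul ncone ncone w := by
        simp only [ncmul, ← Finset.sum_add_distrib, ← Finset.sum_sub_distrib]
        refine Finset.sum_congr rfl fun k hk => ?_
        have := Finset.mem_range.mp hk
        by_cases hkp : k < p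
        · rw [hf _ (by rw [FreeMonoid.toList_ofList, List.length_take]; omega)]; ring
        · rw [hg _ (by rw [FreeMonoid.toList_ofList, List.length_drop]; omega)]; ring
    _ = f w + g w - ncone w := by rw [ncmul_ncone, ncone_ncmul, ncmul_ncone]

lemma ncmul_comm_of_eqBelowDegree_ncone {p q : ℕ} {f g : NCSeries n}
    (hf : EqBelowDegree p f ncone) (hg : EqBelowDegree q g ncone) :
    EqBelowDegree (p + q) (ncmul f g) (ncmul g f) := by
  intro w hw
  rw [ncmul_apply_of_eqBelowDegree_ncone hf hg w hw,
    ncmul_apply_of_eqBelowDegree_ncone hg hf w (by omega), add_comm (f w)]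

lemma ncmul_apply_of_apply_one {f : NCSeries n} (hf : f 1 = 1) (g : NCSeries n)
    (w : FreeMonoid (Fin n)) :
    ncmul f g w = g w + ∑ k ∈ Finset.range (FreeMonoid.toList w).length,
      f (FreeMonoid.ofList ((FreeMonoid.toList w).take (k + 1))) *
        g (FreeMonoid.ofList ((FreeMonoid.toList w).drop (k + 1))) := by
  rw [ncmul, Finset.sum_range_succ', add_comm]
  simp [hf]

/-- The constant term `1` of `f` isolates `g w` in `(f * g) w`; all other terms involve `g` only
on shorter words, so induction on the degree applies. -/
lemma EqBelowDegree.of_ncmul_left {f g h : NCSeries n} (hf : f 1 = 1) :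
    ∀ {m : ℕ}, EqBelowDegree m (ncmul f g) (ncmul f h) → EqBelowDegree m g h
  | 0, _ => fun _ hw => absurd hw (Nat.not_lt_zero _)
  | m + 1, hfgh => by
    have ih : EqBelowDegree m g h :=
      of_ncmul_left hf fun w hw => hfgh w (by omega)
    intro w hw
    have hsums := hfgh w hw
    rw [ncmul_apply_of_apply_one hf, ncmul_apply_of_apply_one hf] at hsums
    have htails : ∀ k ∈ Finset.range (FreeMonoid.toList w).length,
        f (FreeMonoid.ofList ((FreeMonoid.toList w).take (k + 1))) *
            g (FreeMonoid.ofList ((FreeMonoid.toList w).drop (k + 1))) =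
          f (FreeMonoid.ofList ((FreeMonoid.toList w).take (k + 1))) *
            h (FreeMonoid.ofList ((FreeMonoid.toList w).drop (k + 1))) := fun k hk => by
      have := Finset.mem_range.mp hk
      rw [ih _ (by rw [FreeMonoid.toList_ofList, List.length_drop]; omega)]
    rw [Finset.sum_congr rfl htails] at hsums
    exact add_right_cancel hsums

end NCSeries

open NCSeries

section Magnus

variable {n : ℕ} {M : FreeGroup (Fin n) → NCSeries n}

lemma eqBelowDegree_gcomm (hMmul : ∀ g h : FreeGroup (Fin n), M (g * h) = ncmul (M g) (M h))
    {p q : ℕ} (hp : 0 < p) (hq : 0 < q) {a b : FreeGroup (Fin n)}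
    (ha : EqBelowDegree p (M a) ncone) (hb : EqBelowDegree q (M b) ncone) :
    EqBelowDegree (p + q) (M (gcomm a b)) ncone := by
  have hab : a * b = b * a * gcomm a b := by unfold gcomm; group
  have hba : ncmul (M b) (M a) 1 = 1 := by
    rw [ncmul_apply_one, hb 1 (by simpa), ha 1 (by simpa)]
    simp [ncone]
  refine EqBelowDegree.of_ncmul_left hba fun w hw => ?_
  rw [ncmul_ncone, ← hMmul, ← hMmul, ← hab, hMmul, hMmul]
  exact ncmul_comm_of_eqBelowDegree_ncone ha hb w hw

lemma eqBelowDegree_foldr_gcomm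
    (hMmul : ∀ g h : FreeGroup (Fin n), M (g * h) = ncmul (M g) (M h))
    (hMgen : ∀ i : Fin n, M (FreeGroup.of i) = onePlusX i) (l : List (Fin n)) (j : Fin n) :
    EqBelowDegree (l.length + 1)
      (M (List.foldr gcomm (FreeGroup.of j) (l.map FreeGroup.of))) ncone := by
  induction l with
  | nil => simpa [hMgen] using onePlusX_eqBelowDegree_one j
  | cons i l ih =>
    rw [List.length_cons, add_comm _ 1]
    simpa using eqBelowDegree_gcomm hMmul one_pos l.length.succ_pos
      (by simpa [hMgen] using onePlusX_eqBelowDegree_one i) ih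

end Magnus

/-- Let M be the Magnus homomorphism from the free group on x₁,…,xₙ to the
units of ℚ⟨⟨X₁,…,Xₙ⟩⟩, i.e. any multiplicative map with M(xᵢ) = 1 + Xᵢ. For
n ≥ 2, the image of [x₁,[x₂,[…,[x_{n−1},xₙ]…]]]·x₁ has the form
1 + X₁ + (terms of total degree ≥ n): every coefficient in degree < n agrees
with that of 1 + X₁. -/
theorem stmt9 (n : ℕ) (hn : 2 ≤ n)
    (M : FreeGroup (Fin n) → NCSeries n)
    (hMmul : ∀ g h : FreeGroup (Fin n), M (g * h) = ncmul (M g) (M h))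
    (hMgen : ∀ i : Fin n, M (FreeGroup.of i) = onePlusX i) :
    ∀ w : FreeMonoid (Fin n), (FreeMonoid.toList w).length < n →
      M ((List.foldr gcomm
            (FreeGroup.of (⟨n - 1, by omega⟩ : Fin n))
            (((List.finRange n).dropLast).map FreeGroup.of)) *
          FreeGroup.of (⟨0, by omega⟩ : Fin n)) w =
        (if w = 1 then 1
          else if w = FreeMonoid.of (⟨0, by omega⟩ : Fin n) then 1 else 0) := by
  intro w hw
  have hcomm := eqBelowDegree_foldr_gcomm hMmul hMgen ((List.finRange n).dropLast)
    ⟨n - 1, by omega⟩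
  rw [List.length_dropLast, List.length_finRange, Nat.sub_add_cancel (by omega)] at hcomm
  rw [hMmul, hMgen, ncmul_apply_of_eqBelowDegree_ncone hcomm (onePlusX_eqBelowDegree_one _) w
    (by omega), hcomm w hw, add_sub_cancel_left]
  by_cases h1 : w = 1 <;> simp [onePlusX, h1]
end
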